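/- Assume the orthogonality condition Q·Q̃ᵀ = 0. Then Fᵀ·A⁻¹ = F·A⁻¹ = (A⁻¹)^{(k)}, i.e. both Fᵀ·A⁻¹ and F·A⁻¹ equal the matrix obtained from A⁻¹ by zeroing its last N−k columns. (The identity Fᵀ A⁻¹ = F A⁻¹ = (A⁻¹)^{(k)} of Appendix C.) -/
import Mathlib


open Matrix

/-- Let `A` be an invertible `N×N` matrix over a field `K`, with first `k` rows `Q` and
last `N - k` rows `Q̃` satisfying `Q · Q̃ᵀ = 0`.  Let `B` agree with `A` on the first `k`
rows and vanish on the rest, `F := A⁻¹ · B`, and `(A⁻¹)^{(k)}` the matrix obtained from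
`A⁻¹` by zeroing its last `N - k` columns.  Then `Fᵀ · A⁻¹ = F · A⁻¹ = (A⁻¹)^{(k)}`. -/
theorem F_transpose_mul_inv_eq (K : Type*) [Field K] (N k : ℕ) (hk : k ≤ N)
    (A : Matrix (Fin N) (Fin N) K) (hA : IsUnit A)
    (horth : A.submatrix (Fin.castLE hk) id *
      (A.submatrix (fun a : Fin (N - k) => (⟨k + (a : ℕ), by omega⟩ : Fin N)) id)ᵀ = 0) :
    let B : Matrix (Fin N) (Fin N) K := Matrix.of fun i j => if (i : ℕ) < k then A i j else 0
    let F : Matrix (Fin N) (Fin N) K := A⁻¹ * B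
    let Ak : Matrix (Fin N) (Fin N) K := Matrix.of fun i j => if (j : ℕ) < k then A⁻¹ i j else 0
    Fᵀ * A⁻¹ = Ak ∧ F * A⁻¹ = Ak := by
  intro B F Ak
  have hdet : IsUnit A.det := (Matrix.isUnit_iff_isUnit_det A).mp hA
  have hAi : A * A⁻¹ = 1 := Matrix.mul_nonsing_inv A hdet
  have hiA : A⁻¹ * A = 1 := Matrix.nonsing_inv_mul A hdet
  -- orthogonality in pointwise form
  have hG : ∀ i j : Fin N, (i : ℕ) < k → k ≤ (j : ℕ) → ∑ l, A i l * A j l = 0 := by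
    intro i j hi hj
    have h := congrFun (congrFun horth ⟨(i : ℕ), hi⟩) ⟨(j : ℕ) - k, by omega⟩
    simp only [Matrix.mul_apply, Matrix.submatrix_apply, Matrix.transpose_apply,
      Matrix.zero_apply, id] at h
    have hcast : Fin.castLE hk (⟨(i : ℕ), hi⟩ : Fin k) = i := by
      ext; simp
    have hij : (⟨k + ((j : ℕ) - k), by omega⟩ : Fin N) = j := by
      ext; simp; omega
    rw [hcast, hij] at h
    exact h
  -- B * A⁻¹ zeroes the last rows of the identity
  have hBAinv : B * A⁻¹ =
      Matrix.of fun (i j : Fin N) => if (i : ℕ) < k then (1 : Matrix (Fin N) (Fin N) K) i j else 0 := by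
    ext i j
    simp only [Matrix.mul_apply, Matrix.of_apply, B]
    by_cases hi : (i : ℕ) < k
    · simp only [hi, if_true]
      rw [← Matrix.mul_apply, hAi]
    · simp [hi]
  -- second equality
  have hFA : F * A⁻¹ = Ak := by
    show A⁻¹ * B * A⁻¹ = Ak
    rw [mul_assoc, hBAinv]
    ext i j
    simp only [Matrix.mul_apply, Matrix.of_apply, Matrix.one_apply, Ak]
    by_cases hj : (j : ℕ) < k
    · simp only [hj, if_true]
      rw [Finset.sum_eq_single j]
      · simp [hj]
      · intro l _ hl
        simp [hl, Ne.symm hl]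
      · simp
    · simp only [hj, if_false]
      apply Finset.sum_eq_zero
      intro l _
      by_cases hlk : (l : ℕ) < k
      · have : l ≠ j := by intro h; rw [h] at hlk; exact hj hlk
        simp [hlk, this]
      · simp [hlk]
  -- symmetry: A * Bᵀ = B * Aᵀ
  have hsym : A * Bᵀ = B * Aᵀ := by
    ext i j
    simp only [Matrix.mul_apply, Matrix.transpose_apply, Matrix.of_apply, B]
    by_cases hi : (i : ℕ) < k <;> by_cases hj : (j : ℕ) < k
    · simp [hi, hj]
    · simp only [hi, hj, if_true, if_false, mul_zero, Finset.sum_const_zero, if_true]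
      exact (hG i j hi (le_of_not_gt hj)).symm
    · simp only [hi, hj, if_true, if_false, zero_mul, Finset.sum_const_zero]
      have := hG j i hj (le_of_not_gt hi)
      calc ∑ l, A i l * A j l = ∑ l, A j l * A i l := by
            exact Finset.sum_congr rfl fun l _ => mul_comm _ _
        _ = 0 := this
    · simp [hi, hj]
  have hAtdet : IsUnit Aᵀ.det := by simpa [Matrix.det_transpose] using hdet
  have hAti : Aᵀ * (Aᵀ)⁻¹ = 1 := Matrix.mul_nonsing_inv Aᵀ hAtdet
  have hFsym : Fᵀ = F := by
    show (A⁻¹ * B)ᵀ = A⁻¹ * B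
    have hBt : Bᵀ = A⁻¹ * (B * Aᵀ) := by
      rw [← hsym, ← mul_assoc, hiA, one_mul]
    rw [Matrix.transpose_mul, Matrix.transpose_nonsing_inv, hBt,
      mul_assoc, mul_assoc, hAti, mul_one]
  exact ⟨by rw [hFsym]; exact hFA, hFA⟩
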